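/- arXiv:2411.10610 — 4 statements merged into one kernel-verified Lean document; each statement's English description precedes it below -/
import Mathlib

section
/- Let J̃ be a compact interval and η : J̃ → ℂ a C² injective map such that C_η ≤ |η(x)−η(y)|/|x−y| for all x ≠ y in J̃, for some C_η > 0. Define Λ : J̃² → ℝ by Λ(x,y) = ln| (η(x)−η(y))/(x−y) | for x ≠ y and Λ(x,x) = ln|η′(x)|. Then Λ is Lipschitz continuous on J̃² (with the Euclidean metric) with Lipschitz constant at most √2 · C_η^{−1} · sup_{x∈J̃} |η′′(x)|. -/
/-!
Write `Q(u, v) = ∫₀¹ η'(v + t (u - v)) dt` (`segmentMean`). By the fundamental theorem of calculus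
`Q(u, v) = (η u - η v) / (u - v)` off the diagonal, and `Q(u, u) = η'(u)`, so `Λ = log ‖Q‖`
on all of `J̃²`. Since `η'` is `M`-Lipschitz, `Q` moves by at most `M (|Δu| + |Δv|)`. The lower
bound `C_η ≤ ‖Q‖` holds off the diagonal by hypothesis and on it in the limit of slopes, and `log`
is `C_η⁻¹`-Lipschitz on `[C_η, ∞)`. Finally `|Δu| + |Δv| ≤ √2 ‖(Δu, Δv)‖`.
-/

open Set Filter Topology

section SegmentMean

variable {E : Type*} [NormedAddCommGroup E] {s : Set ℝ} {u v : ℝ}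

theorem Convex.mapsTo_segment (hs : Convex ℝ s) (hu : u ∈ s) (hv : v ∈ s) :
    MapsTo (fun t : ℝ => v + t * (u - v)) (Icc 0 1) s :=
  fun _ ht => hs.add_smul_sub_mem hv hu ht

theorem ContinuousOn.intervalIntegrable_comp_segment {g : ℝ → E} (hg : ContinuousOn g s)
    (hs : Convex ℝ s) (hu : u ∈ s) (hv : v ∈ s) :
    IntervalIntegrable (fun t : ℝ => g (v + t * (u - v))) MeasureTheory.volume 0 1 := by
  refine ContinuousOn.intervalIntegrable ?_
  rw [uIcc_of_le zero_le_one]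
  exact hg.comp (by fun_prop) (hs.mapsTo_segment hu hv)

variable [NormedSpace ℝ E]

noncomputable def segmentMean (g : ℝ → E) (u v : ℝ) : E :=
  ∫ t in (0 : ℝ)..1, g (v + t * (u - v))

theorem norm_segmentMean_sub_le {g : ℝ → E} {K : NNReal} (hg : LipschitzOnWith K g s)
    (hs : Convex ℝ s) {u' v' : ℝ} (hu : u ∈ s) (hv : v ∈ s) (hu' : u' ∈ s) (hv' : v' ∈ s) :
    ‖segmentMean g u v - segmentMean g u' v'‖ ≤ K * (|u - u'| + |v - v'|) := by
  rw [segmentMean, segmentMean, ← intervalIntegral.integral_sub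
    (hg.continuousOn.intervalIntegrable_comp_segment hs hu hv)
    (hg.continuousOn.intervalIntegrable_comp_segment hs hu' hv')]
  refine (intervalIntegral.norm_integral_le_of_norm_le_const
    (C := K * (|u - u'| + |v - v'|)) fun t ht => ?_).trans_eq (by simp)
  rw [uIoc_of_le zero_le_one] at ht
  have ht' : t ∈ Icc (0 : ℝ) 1 := Ioc_subset_Icc_self ht
  calc ‖g (v + t * (u - v)) - g (v' + t * (u' - v'))‖
      ≤ K * ‖(v + t * (u - v)) - (v' + t * (u' - v'))‖ :=
        hg.norm_sub_le (hs.mapsTo_segment hu hv ht') (hs.mapsTo_segment hu' hv' ht')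
    _ = K * |t * (u - u') + (1 - t) * (v - v')| := by rw [Real.norm_eq_abs]; ring_nf
    _ ≤ K * (|u - u'| + |v - v'|) := by
        gcongr
        calc |t * (u - u') + (1 - t) * (v - v')|
            ≤ t * |u - u'| + (1 - t) * |v - v'| := by
              refine (abs_add_le _ _).trans_eq ?_
              rw [abs_mul, abs_mul, abs_of_nonneg ht'.1, abs_of_nonneg (sub_nonneg.2 ht'.2)]
          _ ≤ |u - u'| + |v - v'| := by
              nlinarith [ht'.1, ht'.2, abs_nonneg (u - u'), abs_nonneg (v - v')]

variable [CompleteSpace E]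

@[simp]
theorem segmentMean_self (g : ℝ → E) (u : ℝ) : segmentMean g u u = g u := by
  simp [segmentMean]

theorem sub_smul_segmentMean {f f' : ℝ → E} (hs : Convex ℝ s)
    (hf : ∀ z ∈ s, HasDerivWithinAt f (f' z) s z) (hf' : ContinuousOn f' s)
    (hu : u ∈ s) (hv : v ∈ s) : (u - v) • segmentMean f' u v = f u - f v := by
  have hφ : ∀ t ∈ Icc (0 : ℝ) 1, HasDerivWithinAt (fun t : ℝ => f (v + t * (u - v)))
      ((u - v) • f' (v + t * (u - v))) (Icc 0 1) t := by
    intro t ht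
    have hline : HasDerivWithinAt (fun t : ℝ => v + t * (u - v)) (u - v) (Icc 0 1) t := by
      simpa using ((hasDerivAt_id t).mul_const (u - v)).const_add v |>.hasDerivWithinAt
    exact (hf _ (hs.mapsTo_segment hu hv ht)).scomp t hline (hs.mapsTo_segment hu hv)
  rw [segmentMean, ← intervalIntegral.integral_smul,
    intervalIntegral.integral_eq_sub_of_hasDerivAt_of_le zero_le_one
      (fun t ht => (hφ t ht).continuousWithinAt)
      (fun t ht => (hφ t (Ioo_subset_Icc_self ht)).hasDerivAt (Icc_mem_nhds ht.1 ht.2))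
      ((hf'.intervalIntegrable_comp_segment hs hu hv).smul (u - v))]
  simp

end SegmentMean

theorem le_norm_of_hasDerivWithinAt {E : Type*} [NormedAddCommGroup E] [NormedSpace ℝ E]
    {f : ℝ → E} {f' : E} {s : Set ℝ} {x C : ℝ} (hf : HasDerivWithinAt f f' s x)
    [(𝓝[s \ {x}] x).NeBot] (h : ∀ y ∈ s, C * |y - x| ≤ ‖f y - f x‖) : C ≤ ‖f'‖ := by
  refine ge_of_tendsto (hasDerivWithinAt_iff_tendsto_slope.1 hf).norm ?_
  filter_upwards [self_mem_nhdsWithin] with y ⟨hy, hyx⟩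
  have hpos : 0 < |y - x| := abs_pos.2 (sub_ne_zero.2 hyx)
  rw [slope_def_module, norm_smul, norm_inv, Real.norm_eq_abs, le_inv_mul_iff₀ hpos, mul_comm]
  exact h y hy

theorem nhdsWithin_Icc_diff_singleton_neBot {a b x : ℝ} (hab : a < b) (hx : x ∈ Icc a b) :
    (𝓝[Icc a b \ {x}] x).NeBot := by
  rcases hx.2.lt_or_eq with hxb | rfl
  · have := left_nhdsWithin_Ioo_neBot hxb
    refine this.mono (nhdsWithin_mono _ fun y hy => ⟨⟨?_, hy.2.le⟩, hy.1.ne'⟩)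
    linarith [hx.1, hy.1]
  · have := right_nhdsWithin_Ioo_neBot hab
    exact this.mono (nhdsWithin_mono _ fun y hy => ⟨Ioo_subset_Icc_self hy, hy.2.ne⟩)

theorem abs_log_sub_log_le {C r t : ℝ} (hC : 0 < C) (hr : C ≤ r) (ht : C ≤ t) :
    |Real.log r - Real.log t| ≤ C⁻¹ * |r - t| := by
  wlog htr : t ≤ r generalizing r t
  · rw [abs_sub_comm, abs_sub_comm r]
    exact this ht hr (le_of_not_ge htr)
  have ht0 : 0 < t := hC.trans_le ht
  rw [abs_of_nonneg (sub_nonneg.2 (Real.log_le_log ht0 htr)), abs_of_nonneg (sub_nonneg.2 htr),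
    ← Real.log_div (hC.trans_le hr).ne' ht0.ne']
  calc Real.log (r / t) ≤ r / t - 1 := Real.log_le_sub_one_of_pos (div_pos (hC.trans_le hr) ht0)
    _ = (r - t) / t := by field_simp
    _ ≤ (r - t) / C := div_le_div_of_nonneg_left (sub_nonneg.2 htr) hC ht
    _ = C⁻¹ * (r - t) := div_eq_inv_mul _ _

theorem abs_add_abs_le_sqrt_two_mul_sqrt (p q : ℝ) :
    |p| + |q| ≤ √2 * √(p ^ 2 + q ^ 2) := by
  rw [← Real.sqrt_mul zero_le_two]
  refine Real.le_sqrt_of_sq_le ?_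
  nlinarith [sq_nonneg (|p| - |q|), sq_abs p, sq_abs q]

theorem lipschitzOnWith_derivWithin_of_contDiffOn_two {E : Type*} [NormedAddCommGroup E]
    [NormedSpace ℝ E] {f : ℝ → E} {s : Set ℝ} (hf : ContDiffOn ℝ 2 f s) (hs : UniqueDiffOn ℝ s)
    (hconv : Convex ℝ s) (hcpt : IsCompact s) :
    LipschitzOnWith (sSup ((fun x => ‖iteratedDerivWithin 2 f s x‖) '' s)).toNNReal
      (derivWithin f s) s := by
  have hf2 : iteratedDerivWithin 2 f s = derivWithin (derivWithin f s) s := by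
    rw [iteratedDerivWithin_succ, iteratedDerivWithin_one]
  refine hconv.lipschitzOnWith_of_nnnorm_hasDerivWithin_le (f' := iteratedDerivWithin 2 f s)
    (fun x hx => ?_) fun x hx => ?_
  · rw [hf2]
    exact ((hf.derivWithin hs (m := 1) (by norm_num)).differentiableOn one_ne_zero x
      hx).hasDerivWithinAt
  · rw [← norm_toNNReal]
    refine Real.toNNReal_le_toNNReal (le_csSup ?_ (mem_image_of_mem _ hx))
    exact hcpt.bddAbove_image
      (continuous_norm.comp_continuousOn (hf.continuousOn_iteratedDerivWithin le_rfl hs))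

theorem div_sub_eq_segmentMean {f f' : ℝ → ℂ} {s : Set ℝ} (hs : Convex ℝ s)
    (hf : ∀ z ∈ s, HasDerivWithinAt f (f' z) s z) (hf' : ContinuousOn f' s) {u v : ℝ}
    (hu : u ∈ s) (hv : v ∈ s) (huv : u ≠ v) :
    (f u - f v) / ((u : ℂ) - v) = segmentMean f' u v := by
  rw [← sub_smul_segmentMean hs hf hf' hu hv, Complex.real_smul, Complex.ofReal_sub,
    mul_div_cancel_left₀]
  exact sub_ne_zero.2 (Complex.ofReal_injective.ne huv)

theorem le_norm_segmentMean {E : Type*} [NormedAddCommGroup E] [NormedSpace ℝ E]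
    [CompleteSpace E] {f f' : ℝ → E} {a b C u v : ℝ} (hab : a < b)
    (hf : ∀ z ∈ Icc a b, HasDerivWithinAt f (f' z) (Icc a b) z)
    (hf' : ContinuousOn f' (Icc a b))
    (hlow : ∀ x ∈ Icc a b, ∀ y ∈ Icc a b, C * |x - y| ≤ ‖f x - f y‖)
    (hu : u ∈ Icc a b) (hv : v ∈ Icc a b) : C ≤ ‖segmentMean f' u v‖ := by
  rcases eq_or_ne u v with rfl | huv
  · have := nhdsWithin_Icc_diff_singleton_neBot hab hu
    rw [segmentMean_self]
    exact le_norm_of_hasDerivWithinAt (hf u hu) fun w hw => hlow w hw u hu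
  · have hpos : 0 < |u - v| := abs_pos.2 (sub_ne_zero.2 huv)
    have h := hlow u hu v hv
    rw [← sub_smul_segmentMean (convex_Icc a b) hf hf' hu hv, norm_smul, Real.norm_eq_abs]
      at h
    exact le_of_mul_le_mul_left (by linarith) hpos

/-- the function `Λ(x,y) = ln|(η(x)-η(y))/(x-y)|` (with `Λ(x,x) = ln|η'(x)|`)
is Lipschitz on `J̃²` (Euclidean metric) with constant at most `√2 · C_η⁻¹ · sup |η''|`. -/
theorem log_difference_quotient_lipschitz (a b : ℝ) (hab : a < b) (η : ℝ → ℂ) (Cη : ℝ)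
    (hC0 : 0 < Cη)
    (hreg : ContDiffOn ℝ 2 η (Icc a b))
    (hlow : ∀ x ∈ Icc a b, ∀ y ∈ Icc a b, Cη * |x - y| ≤ ‖η x - η y‖)
    (Λ : ℝ → ℝ → ℝ) (M : ℝ)
    (hΛoff : ∀ x ∈ Icc a b, ∀ y ∈ Icc a b, x ≠ y →
      Λ x y = Real.log ‖(η x - η y) / ((x : ℂ) - (y : ℂ))‖)
    (hΛdiag : ∀ x ∈ Icc a b, Λ x x = Real.log ‖derivWithin η (Icc a b) x‖)
    (hM : M = sSup ((fun x => ‖iteratedDerivWithin 2 η (Icc a b) x‖) '' Icc a b)) :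
    ∀ x ∈ Icc a b, ∀ y ∈ Icc a b, ∀ x' ∈ Icc a b, ∀ y' ∈ Icc a b,
      |Λ x y - Λ x' y'|
        ≤ Real.sqrt 2 * Cη⁻¹ * M * Real.sqrt ((x - x') ^ 2 + (y - y') ^ 2) := by
  intro x hx y hy x' hx' y' hy'
  set s := Icc a b
  have hs : UniqueDiffOn ℝ s := uniqueDiffOn_Icc hab
  have hderiv : ∀ z ∈ s, HasDerivWithinAt η (derivWithin η s z) s z := fun z hz =>
    (hreg.differentiableOn two_ne_zero z hz).hasDerivWithinAt
  have hM0 : 0 ≤ M := hM ▸ Real.sSup_nonneg (by rintro _ ⟨z, -, rfl⟩; exact norm_nonneg _)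
  have hLip : LipschitzOnWith M.toNNReal (derivWithin η s) s :=
    hM ▸ lipschitzOnWith_derivWithin_of_contDiffOn_two hreg hs (convex_Icc a b) isCompact_Icc
  have hΛ : ∀ u ∈ s, ∀ v ∈ s, Λ u v = Real.log ‖segmentMean (derivWithin η s) u v‖ := by
    intro u hu v hv
    rcases eq_or_ne u v with rfl | huv
    · rw [hΛdiag u hu, segmentMean_self]
    · rw [hΛoff u hu v hv huv,
        div_sub_eq_segmentMean (convex_Icc a b) hderiv hLip.continuousOn hu hv huv]
  have hQlow := fun u (hu : u ∈ s) v (hv : v ∈ s) =>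
    le_norm_segmentMean hab hderiv hLip.continuousOn hlow hu hv
  have hQLip := norm_segmentMean_sub_le hLip (convex_Icc a b) hx hy hx' hy'
  rw [Real.coe_toNNReal M hM0] at hQLip
  set Q := segmentMean (derivWithin η s)
  calc |Λ x y - Λ x' y'| ≤ Cη⁻¹ * |‖Q x y‖ - ‖Q x' y'‖| := by
        rw [hΛ x hx y hy, hΛ x' hx' y' hy']
        exact abs_log_sub_log_le hC0 (hQlow x hx y hy) (hQlow x' hx' y' hy')
    _ ≤ Cη⁻¹ * (M * (|x - x'| + |y - y'|)) := by
        gcongr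
        exact (abs_norm_sub_norm_le _ _).trans hQLip
    _ ≤ Cη⁻¹ * (M * (√2 * √((x - x') ^ 2 + (y - y') ^ 2))) := by
        gcongr
        exact abs_add_abs_le_sqrt_two_mul_sqrt _ _
    _ = √2 * Cη⁻¹ * M * √((x - x') ^ 2 + (y - y') ^ 2) := by ring
end

section
/- Let ε > 0 and let γ : [−ε, 1+ε] → ℂ be an injective C^∞ map with nowhere-vanishing derivative; set ζ₁ = γ(0) and ζ₂ = γ(1). For t ∈ (0,1] define γ_t(x) = ( γ(tx)(ζ₂−ζ₁) + ζ₁(γ(t)−ζ₂) ) / ( γ(t)−ζ₁ ) for x ∈ [−ε, 1+ε], and set γ₀(x) = x(ζ₂−ζ₁) + ζ₁. Then: (i) for every p ∈ ℕ there exists C_p > 0 such that ‖γ_t‖_{W^∞_p([−ε,1+ε])} ≤ C_p for all t ∈ [0,1]; (ii) there exists a constant 0 < C < 1, independent of t, such that C ≤ |γ_t(x) − γ_t(y)| / |x − y| ≤ C⁻¹ for all t ∈ [0,1] and all x ≠ y in [−ε, 1+ε]. -/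
open Set

set_option maxHeartbeats 1000000

noncomputable section

/-- The `W^∞_p(J)` norm of a complex-valued function on an interval `J`:
`Σ_{q=0}^{p} sup_J |f^{(q)}|` (derivatives taken within `J`). -/
def WnormP (f : ℝ → ℂ) (J : Set ℝ) (p : ℕ) : ℝ :=
  ∑ q ∈ Finset.range (p + 1),
    sSup ((fun x => ‖iteratedDerivWithin q f J x‖) '' J)

open MeasureTheory intervalIntegral in

lemma slope_bounds {ε : ℝ} (hε : 0 < ε) {γ : ℝ → ℂ}
    (hsm : ContDiffOn ℝ (⊤ : ℕ∞) γ (Icc (-ε) (1+ε)))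
    (hinj : InjOn γ (Icc (-ε) (1+ε)))
    (hder : ∀ x ∈ Icc (-ε) (1+ε), derivWithin γ (Icc (-ε) (1+ε)) x ≠ 0) :
    ∃ c C : ℝ, 0 < c ∧ c ≤ C ∧ ∀ a ∈ Icc (-ε) (1+ε), ∀ b ∈ Icc (-ε) (1+ε),
      c * |a - b| ≤ ‖γ a - γ b‖ ∧ ‖γ a - γ b‖ ≤ C * |a - b| := by
  set J := Icc (-ε) (1+ε) with hJdef
  have hle : (-ε) < 1 + ε := by linarith
  have hJu : UniqueDiffOn ℝ J := uniqueDiffOn_Icc hle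
  have hconv : Convex ℝ J := convex_Icc _ _
  have hγc : ContinuousOn γ J := hsm.continuousOn
  have hd : DifferentiableOn ℝ γ J := hsm.differentiableOn (by simp)
  have hγ'c : ContinuousOn (derivWithin γ J) J := (hsm.derivWithin hJu (m := 0) (by simp)).continuousOn
  obtain ⟨φ, hφc, hφeq⟩ : ∃ φ : ℝ → ℂ, Continuous φ ∧ EqOn φ (derivWithin γ J) J := by
    obtain ⟨g, hg⟩ := ContinuousMap.exists_restrict_eq isClosed_Icc
      ⟨J.restrict (derivWithin γ J), hγ'c.restrict⟩
    exact ⟨g, g.continuous, fun x hx => congrFun (congrArg ContinuousMap.toFun hg) ⟨x, hx⟩⟩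
  set g : ℝ × ℝ → ℂ := fun p => ∫ s in (0:ℝ)..1, φ (p.2 + s * (p.1 - p.2)) with hgdef
  have hgc : Continuous g := by
    apply intervalIntegral.continuous_parametric_intervalIntegral_of_continuous' (μ := volume)
    exact hφc.comp (by fun_prop)
  have hline : ∀ a ∈ J, ∀ b ∈ J, ∀ s ∈ Icc (0:ℝ) 1, b + s * (a - b) ∈ J := by
    intro a ha b hb s hs
    simpa [smul_eq_mul] using hconv.add_smul_sub_mem hb ha hs
  have key : ∀ a ∈ J, ∀ b ∈ J, γ a - γ b = (a - b) • g (a, b) := by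
    intro a ha b hb
    have hF : ∀ s ∈ Icc (0:ℝ) 1, HasDerivWithinAt (fun u => γ (b + u * (a - b)))
        ((a - b) • φ (b + s * (a - b))) (Icc 0 1) s := by
      intro s hs
      have h1 : HasDerivWithinAt γ (derivWithin γ J (b + s*(a-b))) J (b + s*(a-b)) :=
        (hd _ (hline a ha b hb s hs)).hasDerivWithinAt
      have h2 : HasDerivWithinAt (fun u : ℝ => b + u * (a - b)) (a - b) (Icc 0 1) s :=
        ((hasDerivAt_mul_const (a-b)).const_add b).hasDerivWithinAt
      have h3 := h1.scomp s h2 (fun u hu => hline a ha b hb u hu)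
      rw [hφeq (hline a ha b hb s hs)]
      exact h3
    have heval : ∫ s in (0:ℝ)..1, (a - b) • φ (b + s * (a - b)) = γ a - γ b := by
      have := intervalIntegral.integral_eq_sub_of_hasDeriv_right_of_le zero_le_one
        (f := fun u => γ (b + u * (a - b)))
        (f' := fun s => (a - b) • φ (b + s * (a - b)))
        (hγc.comp (by fun_prop) (fun u hu => hline a ha b hb u hu))
        (fun s hs => ((hF s (Ioo_subset_Icc_self hs)).hasDerivAt
            (Icc_mem_nhds hs.1 hs.2)).hasDerivWithinAt)
        ((Continuous.intervalIntegrable (by fun_prop) _ _))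
      rw [this]; norm_num
    rw [← heval, hgdef]
    simp [intervalIntegral.integral_smul]
  have hgne : ∀ p ∈ J ×ˢ J, g p ≠ 0 := by
    rintro ⟨a, b⟩ ⟨ha, hb⟩ h0
    rcases eq_or_ne a b with rfl | hab
    · have hga : g (a, a) = φ a := by
        show (∫ s in (0:ℝ)..1, φ (a + s * (a - a))) = φ a
        simp only [sub_self, mul_zero, add_zero, intervalIntegral.integral_const, sub_zero,
          one_smul]
      exact hder a ha (by rw [← hφeq ha, ← hga, h0])
    · have h := key a ha b hb
      rw [h0, smul_zero] at h
      exact hab (hinj ha hb (sub_eq_zero.mp h))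
  have hK : IsCompact (J ×ˢ J) := isCompact_Icc.prod isCompact_Icc
  have h0J : (0:ℝ) ∈ J := by rw [hJdef, mem_Icc]; constructor <;> linarith
  have hKne : (J ×ˢ J).Nonempty := ⟨(0,0), h0J, h0J⟩
  obtain ⟨p₀, hp₀, hmin⟩ := hK.exists_isMinOn hKne ((continuous_norm.comp hgc).continuousOn)
  obtain ⟨p₁, hp₁, hmax⟩ := hK.exists_isMaxOn hKne ((continuous_norm.comp hgc).continuousOn)
  have hlow : ∀ p ∈ J ×ˢ J, ‖g p₀‖ ≤ ‖g p‖ :=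
    fun p hp => isMinOn_iff.mp hmin p hp
  have hhigh : ∀ p ∈ J ×ˢ J, ‖g p‖ ≤ ‖g p₁‖ :=
    fun p hp => isMaxOn_iff.mp hmax p hp
  refine ⟨‖g p₀‖, ‖g p₁‖, ?_, hlow p₁ hp₁, ?_⟩
  · exact (norm_pos_iff.mpr (hgne p₀ hp₀))
  · intro a ha b hb
    have hkey := key a ha b hb
    have habs : ‖γ a - γ b‖ = |a - b| * ‖g (a, b)‖ := by
      rw [hkey, Complex.real_smul, norm_mul, Complex.norm_real, Real.norm_eq_abs]
    constructor
    · rw [habs, mul_comm]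
      exact mul_le_mul_of_nonneg_left (hlow (a,b) (Set.mk_mem_prod ha hb)) (abs_nonneg _)
    · rw [habs, mul_comm]
      exact mul_le_mul_of_nonneg_right (hhigh (a,b) (Set.mk_mem_prod ha hb)) (abs_nonneg _)


lemma iter_const {J : Set ℝ} (hJ : UniqueDiffOn ℝ J) (A : ℂ) :
    ∀ q : ℕ, ∀ x ∈ J, iteratedDerivWithin (q+1) (fun _ => A) J x = 0 := by
  intro q
  induction q with
  | zero =>
    intro x hx
    rw [iteratedDerivWithin_one]
    exact (hasDerivWithinAt_const x J A).derivWithin (hJ x hx)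
  | succ q IH =>
    intro x hx
    rw [iteratedDerivWithin_succ,
      derivWithin_congr (fun y hy => IH y hy) (IH x hx)]
    exact (hasDerivWithinAt_const x J (0:ℂ)).derivWithin (hJ x hx)

lemma iter_affine {J : Set ℝ} (hJ : UniqueDiffOn ℝ J) (A B : ℂ) (q : ℕ) {x : ℝ} (hx : x ∈ J) :
    iteratedDerivWithin (q+1) (fun y : ℝ => (y:ℂ) * A + B) J x = if q = 0 then A else 0 := by
  have hda : ∀ y ∈ J, derivWithin (fun y : ℝ => (y:ℂ) * A + B) J y = A := by
    intro y hy
    have h := ((Complex.ofRealCLM.hasDerivAt.mul_const A).add_const B).hasDerivWithinAt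
      (s := J) (x := y)
    have := h.derivWithin (hJ y hy)
    simpa using this
  rw [iteratedDerivWithin_succ',
    iteratedDerivWithin_congr (fun y hy => hda y hy) hx]
  cases q with
  | zero => simp
  | succ r => simp [iter_const hJ A r x hx]

lemma iter_comp {J : Set ℝ} (hJ : UniqueDiffOn ℝ J) {f : ℝ → ℂ}
    (hf : ContDiffOn ℝ (⊤ : ℕ∞) f J) (k m : ℂ) {t : ℝ} (ht : ∀ x ∈ J, t * x ∈ J) :
    ∀ q : ℕ, ∀ x ∈ J,
      iteratedDerivWithin (q+1) (fun y => k * f (t * y) + m) J x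
        = k * (t:ℂ)^(q+1) * iteratedDerivWithin (q+1) f J (t * x) := by
  have hℓ : ∀ x : ℝ, HasDerivWithinAt (fun y : ℝ => t * y) t J x := by
    intro x
    simpa using ((hasDerivAt_id x).const_mul t).hasDerivWithinAt (s := J)
  intro q
  induction q with
  | zero =>
    intro x hx
    have hfd : HasDerivWithinAt f (derivWithin f J (t*x)) J (t*x) :=
      ((hf.differentiableOn (by simp)) _ (ht x hx)).hasDerivWithinAt
    have hcomp : HasDerivWithinAt (fun y => k * f (t * y) + m)
        (k * ((t:ℝ) • derivWithin f J (t*x))) J x := by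
      simpa [Function.comp_def] using (((hfd.scomp x (hℓ x) ht)).const_mul k).add_const m
    rw [iteratedDerivWithin_one, hcomp.derivWithin (hJ x hx),
      iteratedDerivWithin_one, Complex.real_smul]
    ring
  | succ q IH =>
    intro x hx
    have hg : DifferentiableOn ℝ (iteratedDerivWithin (q+1) f J) J :=
      hf.differentiableOn_iteratedDerivWithin (by norm_cast; exact_mod_cast WithTop.coe_lt_top _) hJ
    have hgd : HasDerivWithinAt (iteratedDerivWithin (q+1) f J)
        (derivWithin (iteratedDerivWithin (q+1) f J) J (t*x)) J (t*x) :=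
      (hg _ (ht x hx)).hasDerivWithinAt
    have hcomp : HasDerivWithinAt (fun y => k * (t:ℂ)^(q+1) * iteratedDerivWithin (q+1) f J (t * y))
        (k * (t:ℂ)^(q+1) * ((t:ℝ) • derivWithin (iteratedDerivWithin (q+1) f J) J (t*x))) J x := by
      simpa [Function.comp_def] using (hgd.scomp x (hℓ x) ht).const_mul (k * (t:ℂ)^(q+1))
    rw [iteratedDerivWithin_succ,
      derivWithin_congr (fun y hy => IH y hy) (IH x hx),
      hcomp.derivWithin (hJ x hx),
      iteratedDerivWithin_succ (n := q + 1) (f := f), Complex.real_smul]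
    ring

/-- uniform smoothness and bi-Lipschitz bounds for the interpolating family
of curves `γ_t`. -/
theorem interpolating_curves_uniform_bounds (ε : ℝ) (hε : 0 < ε) (γ : ℝ → ℂ)
    (hsm : ContDiffOn ℝ (⊤ : ℕ∞) γ (Icc (-ε) (1 + ε)))
    (hinj : InjOn γ (Icc (-ε) (1 + ε)))
    (hder : ∀ x ∈ Icc (-ε) (1 + ε), derivWithin γ (Icc (-ε) (1 + ε)) x ≠ 0)
    (Γ : ℝ → ℝ → ℂ)
    (hΓpos : ∀ t ∈ Ioc (0 : ℝ) 1, ∀ x : ℝ, Γ t x =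
      (γ (t * x) * (γ 1 - γ 0) + γ 0 * (γ t - γ 1)) / (γ t - γ 0))
    (hΓ0 : ∀ x : ℝ, Γ 0 x = (x : ℂ) * (γ 1 - γ 0) + γ 0) :
    (∀ p : ℕ, ∃ C > 0, ∀ t ∈ Icc (0 : ℝ) 1,
        WnormP (Γ t) (Icc (-ε) (1 + ε)) p ≤ C) ∧
      (∃ C : ℝ, 0 < C ∧ C < 1 ∧ ∀ t ∈ Icc (0 : ℝ) 1,
        ∀ x ∈ Icc (-ε) (1 + ε), ∀ y ∈ Icc (-ε) (1 + ε),
          C * |x - y| ≤ ‖Γ t x - Γ t y‖ ∧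
            ‖Γ t x - Γ t y‖ ≤ C⁻¹ * |x - y|) := by
  set J := Icc (-ε) (1 + ε) with hJdef
  have hle : (-ε) < 1 + ε := by linarith
  have hJu : UniqueDiffOn ℝ J := uniqueDiffOn_Icc hle
  have h0J : (0:ℝ) ∈ J := by rw [hJdef, mem_Icc]; constructor <;> linarith
  have h1J : (1:ℝ) ∈ J := by rw [hJdef, mem_Icc]; constructor <;> linarith
  obtain ⟨c, C, hc, hcC, hslope⟩ := slope_bounds hε hsm hinj hder
  have hC : 0 < C := lt_of_lt_of_le hc hcC
  have htJ : ∀ t ∈ Ioc (0:ℝ) 1, t ∈ J := by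
    intro t ht; rw [hJdef, mem_Icc]; constructor <;> [linarith [ht.1]; linarith [ht.2]]
  have hmul : ∀ t ∈ Icc (0:ℝ) 1, ∀ x ∈ J, t * x ∈ J := by
    intro t ht x hx
    rw [hJdef, mem_Icc]
    rw [hJdef, mem_Icc] at hx
    have h1 := mul_le_mul_of_nonneg_left hx.2 ht.1
    have h2 := mul_le_mul_of_nonneg_left hx.1 ht.1
    constructor <;> nlinarith [ht.1, ht.2]
  -- bounds on |γ 1 - γ 0|
  have hw := hslope 1 h1J 0 h0J
  rw [show |(1:ℝ) - 0| = 1 by norm_num] at hw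
  have hw1 : c ≤ ‖γ 1 - γ 0‖ := by simpa using hw.1
  have hw2 : ‖γ 1 - γ 0‖ ≤ C := by simpa using hw.2
  -- bounds on the denominator
  have hden : ∀ t ∈ Ioc (0:ℝ) 1, c * t ≤ ‖γ t - γ 0‖ ∧
      ‖γ t - γ 0‖ ≤ C * t := by
    intro t ht
    have := hslope t (htJ t ht) 0 h0J
    rwa [sub_zero, abs_of_pos ht.1] at this
  have hne : ∀ t ∈ Ioc (0:ℝ) 1, γ t - γ 0 ≠ 0 := by
    intro t ht h
    have h1 := (hden t ht).1
    rw [h] at h1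
    simp only [norm_zero] at h1
    nlinarith [ht.1]
  have hΓ' : ∀ t ∈ Ioc (0:ℝ) 1, ∀ x : ℝ,
      Γ t x = (γ 1 - γ 0) / (γ t - γ 0) * γ (t * x) +
        (γ 0 - (γ 1 - γ 0) / (γ t - γ 0) * γ 0) := by
    intro t ht x
    rw [hΓpos t ht x]
    field_simp [hne t ht]
    ring
  -- Part (ii)
  have part2 : ∃ D : ℝ, 0 < D ∧ D < 1 ∧ ∀ t ∈ Icc (0 : ℝ) 1,
      ∀ x ∈ Icc (-ε) (1 + ε), ∀ y ∈ Icc (-ε) (1 + ε),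
        D * |x - y| ≤ ‖Γ t x - Γ t y‖ ∧
          ‖Γ t x - Γ t y‖ ≤ D⁻¹ * |x - y| := by
    set D := min (c^2/C) (min (c/C^2) (1/2)) with hDdef
    have hD0 : 0 < D := lt_min (by positivity) (lt_min (by positivity) (by norm_num))
    have hD1 : D ≤ c^2/C := min_le_left _ _
    have hD2 : D ≤ c/C^2 := le_trans (min_le_right _ _) (min_le_left _ _)
    have hDinv : C^2/c ≤ D⁻¹ := by
      rw [← inv_div c (C^2)]
      exact inv_anti₀ hD0 hD2
    refine ⟨D, hD0, lt_of_le_of_lt (le_trans (min_le_right _ _) (min_le_right _ _)) (by norm_num),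
      ?_⟩
    intro t ht x hx y hy
    rcases eq_or_lt_of_le ht.1 with h0t | h0t
    · -- t = 0
      have habs : ‖Γ t x - Γ t y‖ = ‖γ 1 - γ 0‖ * |x - y| := by
        have hxy : Γ t x - Γ t y = ((x - y : ℝ) : ℂ) * (γ 1 - γ 0) := by
          rw [← h0t, hΓ0 x, hΓ0 y]; push_cast; ring
        rw [hxy, norm_mul, Complex.norm_real, Real.norm_eq_abs, mul_comm]
      constructor
      · rw [habs]
        have : D ≤ ‖γ 1 - γ 0‖ := by
          refine le_trans hD1 (le_trans ?_ hw1)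
          rw [div_le_iff₀ hC]; nlinarith
        exact mul_le_mul_of_nonneg_right this (abs_nonneg _)
      · rw [habs]
        have : ‖γ 1 - γ 0‖ ≤ D⁻¹ := by
          refine le_trans hw2 (le_trans ?_ hDinv)
          rw [le_div_iff₀ hc]; nlinarith
        exact mul_le_mul_of_nonneg_right this (abs_nonneg _)
    · -- 0 < t
      have htI : t ∈ Ioc (0:ℝ) 1 := ⟨h0t, ht.2⟩
      have hd := hden t htI
      have hd0 : 0 < ‖γ t - γ 0‖ := by nlinarith [hd.1]
      have habs : ‖Γ t x - Γ t y‖ =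
          ‖γ 1 - γ 0‖ / ‖γ t - γ 0‖ *
            ‖γ (t * x) - γ (t * y)‖ := by
        have hxy : Γ t x - Γ t y = (γ 1 - γ 0) / (γ t - γ 0) * (γ (t*x) - γ (t*y)) := by
          rw [hΓ' t htI x, hΓ' t htI y]; ring
        rw [hxy, norm_mul, norm_div]
      have htxy : |t * x - t * y| = t * |x - y| := by
        rw [← mul_sub, abs_mul, abs_of_pos h0t]
      have hu := hslope (t*x) (hmul t ht x hx) (t*y) (hmul t ht y hy)
      rw [htxy] at hu
      set w := ‖γ 1 - γ 0‖
      set d := ‖γ t - γ 0‖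
      set u := ‖γ (t*x) - γ (t*y)‖
      have hu0 : 0 ≤ u := norm_nonneg _
      constructor
      · rw [habs, div_mul_eq_mul_div, le_div_iff₀ hd0]
        calc D * |x - y| * d ≤ (c^2/C) * |x - y| * (C * t) := by
              gcongr
              exact hd.2
          _ = c * (c * (t * |x - y|)) := by field_simp
          _ ≤ w * u := mul_le_mul hw1 hu.1 (by positivity) (le_trans hc.le hw1)
      · rw [habs, div_mul_eq_mul_div, div_le_iff₀ hd0]
        calc w * u ≤ C * (C * (t * |x - y|)) := mul_le_mul hw2 hu.2 hu0 hC.le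
          _ = (C^2/c) * |x - y| * (c * t) := by field_simp
          _ ≤ D⁻¹ * |x - y| * d := by
              gcongr
              exact hd.1
  -- Part (i)
  have part1 : ∀ p : ℕ, ∃ Cp > 0, ∀ t ∈ Icc (0 : ℝ) 1,
      WnormP (Γ t) (Icc (-ε) (1 + ε)) p ≤ Cp := by
    intro p
    set M : ℕ → ℝ := fun q =>
      sSup ((fun x => ‖iteratedDerivWithin q γ J x‖) '' J) with hMdef
    have hMb : ∀ q : ℕ, ∀ x ∈ J, ‖iteratedDerivWithin q γ J x‖ ≤ M q := by
      intro q x hx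
      apply le_csSup
      · exact (isCompact_Icc.image_of_continuousOn
          (continuous_norm.comp_continuousOn
            (hsm.continuousOn_iteratedDerivWithin (by exact_mod_cast le_top) hJu))).bddAbove
      · exact mem_image_of_mem _ hx
    have hM0 : ∀ q, 0 ≤ M q := fun q => le_trans (norm_nonneg _) (hMb q 0 h0J)
    set B : ℕ → ℝ := fun q =>
      (‖γ 0‖ + (1+ε) * (C*C/c)) + (‖γ 0‖
        + (1+ε) * ‖γ 1 - γ 0‖) + (C/c) * M q + ‖γ 1 - γ 0‖ with hBdef
    have haux : ∀ q, 0 ≤ (C/c) * M q := fun q => mul_nonneg (by positivity) (hM0 q)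
    have haux2 : (0:ℝ) ≤ (1+ε) * (C*C/c) := by positivity
    have haux3 : (0:ℝ) ≤ (1+ε) * ‖γ 1 - γ 0‖ := by positivity
    have hB0 : ∀ q, 0 ≤ B q := by
      intro q
      have h1 := haux q
      have h2 := norm_nonneg (γ 0)
      have h3 := norm_nonneg (γ 1 - γ 0)
      simp only [hBdef]
      linarith
    have hpt : ∀ t ∈ Icc (0:ℝ) 1, ∀ q : ℕ, ∀ x ∈ J,
        ‖iteratedDerivWithin q (Γ t) J x‖ ≤ B q := by
      intro t ht q x hx
      have h2 := norm_nonneg (γ 0)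
      have h3 := norm_nonneg (γ 1 - γ 0)
      have h1 := haux q
      rcases eq_or_lt_of_le ht.1 with h0t | h0t
      · -- t = 0
        have hfun : Γ t = fun z : ℝ => (z:ℂ) * (γ 1 - γ 0) + γ 0 := by
          funext z; rw [← h0t]; exact hΓ0 z
        rw [hfun]
        rcases q with _ | r
        · rw [iteratedDerivWithin_zero]
          have hxb : |x| ≤ 1 + ε := by
            rw [hJdef, mem_Icc] at hx
            rw [abs_le]; constructor <;> linarith [hx.1, hx.2]
          have hcalc : ‖(x:ℂ) * (γ 1 - γ 0) + γ 0‖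
              ≤ (1+ε) * ‖γ 1 - γ 0‖ + ‖γ 0‖ := by
            calc ‖(x:ℂ) * (γ 1 - γ 0) + γ 0‖
                ≤ ‖(x:ℂ) * (γ 1 - γ 0)‖ + ‖γ 0‖ :=
                  norm_add_le _ _
              _ = |x| * ‖γ 1 - γ 0‖ + ‖γ 0‖ := by
                  rw [norm_mul, Complex.norm_real, Real.norm_eq_abs]
              _ ≤ (1+ε) * ‖γ 1 - γ 0‖ + ‖γ 0‖ := by gcongr
          simp only [hBdef]
          linarith
        · rw [iter_affine hJu (γ 1 - γ 0) (γ 0) r hx]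
          split_ifs
          · simp only [hBdef]; linarith
          · simp only [norm_zero]; exact hB0 _
      · -- t > 0
        have htI : t ∈ Ioc (0:ℝ) 1 := ⟨h0t, ht.2⟩
        have hfun : Γ t = fun y : ℝ => (γ 1 - γ 0) / (γ t - γ 0) * γ (t * y) +
            (γ 0 - (γ 1 - γ 0) / (γ t - γ 0) * γ 0) := funext (hΓ' t htI)
        have hd := hden t htI
        have hd0 : 0 < ‖γ t - γ 0‖ := by nlinarith [hd.1]
        have hw' : ‖(γ 1 - γ 0) / (γ t - γ 0)‖ ≤ C / (c * t) := by
          rw [norm_div]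
          exact div_le_div₀ hC.le hw2 (by positivity) hd.1
        have hw'0 : 0 ≤ ‖(γ 1 - γ 0) / (γ t - γ 0)‖ := norm_nonneg _
        rw [hfun]
        rcases q with _ | r
        · rw [iteratedDerivWithin_zero]
          have heq : (γ 1 - γ 0) / (γ t - γ 0) * γ (t*x) +
              (γ 0 - (γ 1 - γ 0) / (γ t - γ 0) * γ 0) =
              γ 0 + (γ 1 - γ 0) / (γ t - γ 0) * (γ (t*x) - γ 0) := by ring
          have hxb : |x| ≤ 1 + ε := by
            rw [hJdef, mem_Icc] at hx
            rw [abs_le]; constructor <;> linarith [hx.1, hx.2]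
          have hgb : ‖γ (t*x) - γ 0‖ ≤ C * (t * (1+ε)) := by
            have h5 := (hslope (t*x) (hmul t ht x hx) 0 h0J).2
            rw [sub_zero, abs_mul, abs_of_pos h0t] at h5
            refine le_trans h5 ?_
            gcongr
          have hcalc : ‖γ 0 + (γ 1 - γ 0) / (γ t - γ 0) * (γ (t*x) - γ 0)‖
              ≤ ‖γ 0‖ + (C/(c*t)) * (C * (t * (1+ε))) := by
            calc ‖γ 0 + (γ 1 - γ 0) / (γ t - γ 0) * (γ (t*x) - γ 0)‖
                ≤ ‖γ 0‖ +
                  ‖(γ 1 - γ 0) / (γ t - γ 0)‖ * ‖γ (t*x) - γ 0‖ := by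
                  rw [← norm_mul]; exact norm_add_le _ _
              _ ≤ ‖γ 0‖ + (C/(c*t)) * (C * (t * (1+ε))) := by
                  gcongr
          rw [heq]
          have heq2 : (C/(c*t)) * (C * (t * (1+ε))) = (1+ε) * (C*C/c) := by
            field_simp
          rw [heq2] at hcalc
          simp only [hBdef]
          linarith
        · rw [iter_comp hJu hsm ((γ 1 - γ 0) / (γ t - γ 0))
            (γ 0 - (γ 1 - γ 0) / (γ t - γ 0) * γ 0) (hmul t ht) r x hx]
          rw [norm_mul, norm_mul, norm_pow, Complex.norm_real, Real.norm_eq_abs, abs_of_pos h0t]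
          have hMq := hMb (r+1) (t*x) (hmul t ht x hx)
          have hstep : ‖(γ 1 - γ 0) / (γ t - γ 0)‖ * t^(r+1) *
              ‖iteratedDerivWithin (r+1) γ J (t*x)‖
                ≤ (C/(c*t)) * t^(r+1) * M (r+1) := by
            have ht1 : (0:ℝ) ≤ t^(r+1) := by positivity
            apply mul_le_mul
            · exact mul_le_mul_of_nonneg_right hw' ht1
            · exact hMq
            · exact norm_nonneg _
            · positivity
          have heq2 : (C/(c*t)) * t^(r+1) * M (r+1) = (C/c) * t^r * M (r+1) := by
            field_simp
            ring
          rw [heq2] at hstep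
          have hstep2 : (C/c) * t^r * M (r+1) ≤ (C/c) * M (r+1) := by
            have h7 : t^r ≤ 1 := pow_le_one₀ h0t.le ht.2
            have h6 : (C/c) * t^r ≤ C/c := mul_le_of_le_one_right (div_nonneg hC.le hc.le) h7
            exact mul_le_mul_of_nonneg_right h6 (hM0 (r+1))
          simp only [hBdef]
          linarith
    refine ⟨(∑ q ∈ Finset.range (p+1), B q) + 1, ?_, ?_⟩
    · have := Finset.sum_nonneg (fun q (_ : q ∈ Finset.range (p+1)) => hB0 q)
      linarith
    · intro t ht
      rw [WnormP]
      have hsum : ∀ q ∈ Finset.range (p+1),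
          sSup ((fun x => ‖iteratedDerivWithin q (Γ t) J x‖) '' J) ≤ B q := by
        intro q _
        apply Real.sSup_le
        · rintro _ ⟨x, hx, rfl⟩
          exact hpt t ht q x hx
        · exact hB0 q
      have := Finset.sum_le_sum hsum
      linarith
  exact ⟨part1, part2⟩
end
end

section
/- Let d ≥ 1, let Σ be a real symmetric positive-definite d×d matrix, A a real symmetric d×d matrix, and m, λ ∈ ℝ^d. Then the complex matrix I − iΣA is invertible, and, with Z = (det(2πΣ))^{−1/2} ∫_{ℝ^d} exp( −(1/2)⟨x−m, Σ^{−1}(x−m)⟩ + (i/2)⟨x, Ax⟩ + i⟨λ, x⟩ ) dx, one has Z² · det(I − iΣA) = exp( i⟨m, A(I − iΣA)^{−1} m⟩ + 2i⟨λ, (I − iΣA)^{−1} m⟩ − ⟨λ, (I − iΣA)^{−1} Σ λ⟩ ). -/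
/-!
Write `Σ = Q Qᵀ` with `Qᵀ A Q = diag μ` (diagonalize `Σ^{1/2} A Σ^{1/2}` orthogonally). The
substitution `x = m + Q v` splits the integral into one-dimensional Gaussians
`∫ exp (-(1 - iμₖ) vₖ² / 2 + i wₖ vₖ)` with `w = Qᵀ (A m + λ)`; squaring them removes the
square-root branches, and `(I - iΣA) Q = Q diag (1 - iμ)` gives `det (I - iΣA) = ∏ₖ (1 - iμₖ)`.
What is left is completing the square: `G = (I - iΣA)⁻¹ Σ = Q diag (1 - iμ)⁻¹ Qᵀ` is symmetric,
`(I - iΣA)⁻¹ = I + i G A`, and `∑ₖ wₖ² / (1 - iμₖ) = ⟨A m + λ, G (A m + λ)⟩`.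
-/

open MeasureTheory Matrix Complex
open scoped Matrix

noncomputable section

variable {n : Type*} [Fintype n]

theorem Complex.ofReal_dotProduct (v w : n → ℝ) :
    ((v ⬝ᵥ w : ℝ) : ℂ) = (fun i => (v i : ℂ)) ⬝ᵥ (fun i => (w i : ℂ)) :=
  RingHom.map_dotProduct ofRealHom v w

theorem Complex.ofReal_mulVec (M : Matrix n n ℝ) (v : n → ℝ) :
    (fun i => ((M *ᵥ v) i : ℂ)) = M.map ofReal *ᵥ fun j => (v j : ℂ) :=
  funext (RingHom.map_mulVec ofRealHom M v)

theorem Matrix.map_ofReal_mul (M N : Matrix n n ℝ) :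
    (M * N).map ofReal = M.map ofReal * N.map ofReal :=
  Matrix.map_mul (f := ofRealHom)

theorem Matrix.IsSymm.dotProduct_mulVec_comm {R : Type*} [CommSemiring R] {A : Matrix n n R}
    (hA : A.IsSymm) (u w : n → R) : u ⬝ᵥ (A *ᵥ w) = w ⬝ᵥ (A *ᵥ u) := by
  rw [dotProduct_mulVec, ← mulVec_transpose, hA.eq, dotProduct_comm]

theorem Matrix.mulVec_dotProduct_mulVec_mulVec {R : Type*} [CommSemiring R] (P N : Matrix n n R)
    (u v : n → R) : (P *ᵥ u) ⬝ᵥ (N *ᵥ (P *ᵥ v)) = u ⬝ᵥ ((Pᵀ * N * P) *ᵥ v) := by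
  rw [← mulVec_mulVec, ← mulVec_mulVec, dotProduct_mulVec u, vecMul_transpose]

theorem one_sub_I_mul_ofReal_ne_zero (x : ℝ) : 1 - I * x ≠ 0 := by
  intro h
  simpa using congrArg re h

theorem sq_integral_cexp_neg_sum_mul_add {b : n → ℂ} (hb : ∀ i, 0 < (b i).re) (c : n → ℂ) :
    (∫ v : n → ℝ, cexp (-∑ i, b i * (v i : ℂ) ^ 2 + ∑ i, c i * v i)) ^ 2
      = ∏ i, Real.pi / b i * cexp (c i ^ 2 / (2 * b i)) := by
  rw [GaussianFourier.integral_cexp_neg_sum_mul_add hb, ← Finset.prod_pow]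
  refine Finset.prod_congr rfl fun i _ => ?_
  have hb0 : b i ≠ 0 := fun h => by simpa [h] using hb i
  rw [mul_pow, ← exp_nat_mul, one_div, ← Nat.cast_ofNat, cpow_nat_inv_pow _ two_ne_zero]
  congr 2
  field_simp
  ring

variable [DecidableEq n]

theorem integral_comp_add_mulVec {E : Type*} [NormedAddCommGroup E] [NormedSpace ℝ E]
    {Q : Matrix n n ℝ} (hQ : Q.det ≠ 0) (m : n → ℝ) (f : (n → ℝ) → E) :
    ∫ v, f (m + Q *ᵥ v) = |Q.det|⁻¹ • ∫ x, f x := by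
  have hmap : Measure.map (toLin' Q) volume = ENNReal.ofReal |Q.det|⁻¹ • volume := by
    rw [Real.map_linearMap_volume_pi_eq_smul_volume_pi (by rwa [LinearMap.det_toLin']),
      LinearMap.det_toLin', abs_inv]
  let e : (n → ℝ) ≃ᵐ (n → ℝ) :=
    (Q.toLinearEquiv' (Q.invertibleOfIsUnitDet hQ.isUnit)).toContinuousLinearEquiv
      |>.toHomeomorph.toMeasurableEquiv
  have h := integral_map_equiv (μ := volume) e (fun x => f (m + x))
  rw [show Measure.map e volume = Measure.map (toLin' Q) volume from rfl, hmap,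
    integral_smul_measure, ENNReal.toReal_ofReal (by positivity),
    integral_add_left_eq_self] at h
  exact h.symm

theorem Matrix.PosDef.exists_simultaneous_diagonalization {S A : Matrix n n ℝ}
    (hS : S.PosDef) (hA : A.IsSymm) :
    ∃ (Q : Matrix n n ℝ) (μ : n → ℝ), Q * Qᵀ = S ∧ Qᵀ * A * Q = diagonal μ := by
  open scoped MatrixOrder in
  obtain ⟨T, hT, rfl⟩ : ∃ T : Matrix n n ℝ, Tᵀ = T ∧ T * T = S :=
    ⟨CFC.sqrt S, (CFC.sqrt_nonneg S).posSemidef.1, CFC.sqrt_mul_sqrt_self _ hS.posSemidef.nonneg⟩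
  have hM : (T * A * T).IsHermitian := by
    rw [IsHermitian, conjTranspose_eq_transpose_of_trivial, transpose_mul, transpose_mul, hT,
      hA.eq, Matrix.mul_assoc]
  set U : Matrix n n ℝ := (hM.eigenvectorUnitary : Matrix n n ℝ)
  have hUU : U * Uᵀ = 1 := Unitary.coe_mul_star_self hM.eigenvectorUnitary
  refine ⟨T * U, hM.eigenvalues, ?_, ?_⟩
  · rw [transpose_mul, hT, Matrix.mul_assoc, ← Matrix.mul_assoc U, hUU, Matrix.one_mul]
  · have hdiag : Uᵀ * (T * A * T) * U = diagonal hM.eigenvalues := by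
      simpa [U, star_eq_conjTranspose] using hM.conjStarAlgAut_star_eigenvectorUnitary
    rw [← hdiag, transpose_mul, hT]
    noncomm_ring

section Field

variable {K : Type*} [Field K] {S A Q : Matrix n n K} {μ : n → K}

theorem one_sub_smul_mul_mul_eq (c : K) (h : S * A * Q = Q * diagonal μ) :
    (1 - c • (S * A)) * Q = Q * diagonal (fun k => 1 - c * μ k) := by
  rw [sub_mul, smul_mul, h, Matrix.one_mul]
  ext i j
  simp only [Matrix.sub_apply, Matrix.smul_apply, mul_diagonal, smul_eq_mul]
  ring

theorem det_one_sub_smul_mul (c : K) (hQ : Q.det ≠ 0) (h : S * A * Q = Q * diagonal μ) :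
    (1 - c • (S * A)).det = ∏ k, (1 - c * μ k) := by
  have := congrArg det (one_sub_smul_mul_mul_eq c h)
  rw [det_mul, det_mul, det_diagonal, mul_comm] at this
  exact mul_left_cancel₀ hQ this

theorem inv_one_sub_smul_mul_mul_eq (c : K) (hQ : Q.det ≠ 0) (hQS : Q * Qᵀ = S)
    (h : S * A * Q = Q * diagonal μ) (hμ : ∀ k, 1 - c * μ k ≠ 0) :
    (1 - c • (S * A))⁻¹ * S = Q * diagonal (fun k => (1 - c * μ k)⁻¹) * Qᵀ := by
  have hB : IsUnit (1 - c • (S * A)).det := by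
    rw [det_one_sub_smul_mul c hQ h]
    exact (Finset.prod_ne_zero_iff.2 fun k _ => hμ k).isUnit
  have hBG : (1 - c • (S * A)) * (Q * diagonal (fun k => (1 - c * μ k)⁻¹) * Qᵀ) = S := by
    rw [← Matrix.mul_assoc, ← Matrix.mul_assoc, one_sub_smul_mul_mul_eq c h,
      Matrix.mul_assoc Q, diagonal_mul_diagonal]
    simp_rw [mul_inv_cancel₀ (hμ _)]
    rw [diagonal_one, Matrix.mul_one, hQS]
  rw [← nonsing_inv_mul_cancel_left _ (Q * _ * Qᵀ) hB, hBG]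

end Field

section CommRing

variable {R : Type*} [CommRing R] {S A : Matrix n n R}

theorem Matrix.IsSymm.inv_one_sub_smul_mul_mul (hS : S.IsSymm) (hA : A.IsSymm) (c : R) :
    ((1 - c • (S * A))⁻¹ * S).IsSymm := by
  set B := 1 - c • (S * A)
  have hBt : S * Bᵀ = B * S := by
    simp only [B, transpose_sub, transpose_one, transpose_smul, transpose_mul, hS.eq, hA.eq]
    noncomm_ring
  by_cases hB : IsUnit B.det
  · have hBt' : IsUnit Bᵀ.det := by rwa [det_transpose]
    rw [IsSymm, transpose_mul, hS.eq, transpose_nonsing_inv]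
    calc S * Bᵀ⁻¹ = B⁻¹ * (B * S) * Bᵀ⁻¹ := by rw [nonsing_inv_mul_cancel_left _ _ hB]
      _ = B⁻¹ * S * (Bᵀ * Bᵀ⁻¹) := by rw [← hBt]; noncomm_ring
      _ = B⁻¹ * S := by rw [mul_nonsing_inv _ hBt', Matrix.mul_one]
  · rw [nonsing_inv_apply_not_isUnit _ hB, Matrix.zero_mul]
    exact isSymm_zero

end CommRing

theorem completeSquare_inv_one_sub_I_smul_mul {S A : Matrix n n ℂ} (hS : S.IsSymm)
    (hA : A.IsSymm) (hB : IsUnit (1 - I • (S * A)).det) (m l : n → ℂ) :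
    I * (m ⬝ᵥ ((A * (1 - I • (S * A))⁻¹) *ᵥ m)) + 2 * I * (l ⬝ᵥ ((1 - I • (S * A))⁻¹ *ᵥ m))
        - l ⬝ᵥ (((1 - I • (S * A))⁻¹ * S) *ᵥ l)
      = I * (m ⬝ᵥ (A *ᵥ m)) + 2 * I * (l ⬝ᵥ m)
        - (A *ᵥ m + l) ⬝ᵥ (((1 - I • (S * A))⁻¹ * S) *ᵥ (A *ᵥ m + l)) := by
  set G := (1 - I • (S * A))⁻¹ * S
  have hG : G.IsSymm := hS.inv_one_sub_smul_mul_mul hA I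
  have hinv : (1 - I • (S * A))⁻¹ = 1 + I • (G * A) := by
    have h := nonsing_inv_mul _ hB
    rw [Matrix.mul_sub, Matrix.mul_one, Matrix.mul_smul, ← Matrix.mul_assoc] at h
    exact sub_eq_iff_eq_add.1 h
  have hAGA : (A *ᵥ m) ⬝ᵥ (G *ᵥ (A *ᵥ m)) = m ⬝ᵥ (A *ᵥ (G *ᵥ (A *ᵥ m))) := by
    rw [dotProduct_comm, hA.dotProduct_mulVec_comm]
  have hGl : (A *ᵥ m) ⬝ᵥ (G *ᵥ l) = l ⬝ᵥ (G *ᵥ (A *ᵥ m)) := hG.dotProduct_mulVec_comm _ _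
  rw [hinv]
  simp only [Matrix.mul_add, Matrix.mul_one, Matrix.mul_smul, add_mulVec, one_mulVec, smul_mulVec,
    ← mulVec_mulVec, dotProduct_add, add_dotProduct, dotProduct_smul, mulVec_add, smul_eq_mul,
    hAGA, hGl]
  linear_combination (m ⬝ᵥ (A *ᵥ (G *ᵥ (A *ᵥ m))) + 2 * (l ⬝ᵥ (G *ᵥ (A *ᵥ m)))) * I_sq

def gaussianExponent (S A : Matrix n n ℝ) (m l x : n → ℝ) : ℂ :=
  ((-(1 / 2) * ((x - m) ⬝ᵥ (S⁻¹ *ᵥ (x - m))) : ℝ) : ℂ) + I / 2 * ((x ⬝ᵥ (A *ᵥ x) : ℝ) : ℂ)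
    + I * ((l ⬝ᵥ x : ℝ) : ℂ)

section Diagonalized

variable {S A Q : Matrix n n ℝ} {μ : n → ℝ}

theorem gaussianExponent_add_mulVec (hQ : Q.det ≠ 0) (hQS : Q * Qᵀ = S)
    (hQA : Qᵀ * A * Q = diagonal μ) (hA : A.IsSymm) (m l v : n → ℝ) :
    gaussianExponent S A m l (m + Q *ᵥ v)
      = I / 2 * ((m ⬝ᵥ (A *ᵥ m) : ℝ) : ℂ) + I * ((l ⬝ᵥ m : ℝ) : ℂ)
        + (-∑ k, (1 - I * μ k) / 2 * (v k : ℂ) ^ 2 + ∑ k, I * (Qᵀ *ᵥ (A *ᵥ m + l)) k * v k) := by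
  have hQS' : Qᵀ * S⁻¹ * Q = 1 := by
    rw [← hQS, Matrix.mul_inv_rev, ← Matrix.mul_assoc Qᵀ,
      mul_nonsing_inv _ (by rw [det_transpose]; exact hQ.isUnit), Matrix.one_mul,
      nonsing_inv_mul _ hQ.isUnit]
  have hS : (Q *ᵥ v) ⬝ᵥ (S⁻¹ *ᵥ (Q *ᵥ v)) = ∑ k, v k ^ 2 := by
    rw [mulVec_dotProduct_mulVec_mulVec, hQS', one_mulVec]
    simp only [dotProduct, sq]
  have hcross (w : n → ℝ) : (Q *ᵥ v) ⬝ᵥ w = ∑ k, (Qᵀ *ᵥ w) k * v k := by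
    rw [← vecMul_transpose Q v, ← dotProduct_mulVec, dotProduct_comm]
    rfl
  have hquad : (m + Q *ᵥ v) ⬝ᵥ (A *ᵥ (m + Q *ᵥ v))
      = m ⬝ᵥ (A *ᵥ m) + ∑ k, (2 * (Qᵀ *ᵥ (A *ᵥ m)) k * v k + μ k * v k ^ 2) := by
    have hdiag : (Q *ᵥ v) ⬝ᵥ (A *ᵥ (Q *ᵥ v)) = ∑ k, μ k * v k ^ 2 := by
      rw [mulVec_dotProduct_mulVec_mulVec, hQA]
      simp only [dotProduct, mulVec_diagonal]
      exact Finset.sum_congr rfl fun k _ => by ring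
    rw [mulVec_add, dotProduct_add, add_dotProduct, add_dotProduct,
      hA.dotProduct_mulVec_comm m (Q *ᵥ v), hdiag, hcross, Finset.sum_add_distrib]
    simp only [mul_assoc, ← Finset.mul_sum]
    ring
  have hl : l ⬝ᵥ (m + Q *ᵥ v) = l ⬝ᵥ m + ∑ k, (Qᵀ *ᵥ l) k * v k := by
    rw [dotProduct_add, dotProduct_comm l (Q *ᵥ v), hcross]
  have hsum : -∑ k, (1 - I * μ k) / 2 * (v k : ℂ) ^ 2 + ∑ k, I * (Qᵀ *ᵥ (A *ᵥ m + l)) k * v k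
      = -(1 / 2) * ((∑ k, v k ^ 2 : ℝ) : ℂ)
        + I / 2 * ((∑ k, (2 * (Qᵀ *ᵥ (A *ᵥ m)) k * v k + μ k * v k ^ 2) : ℝ) : ℂ)
        + I * ((∑ k, (Qᵀ *ᵥ l) k * v k : ℝ) : ℂ) := by
    push_cast
    simp only [Finset.mul_sum, ← Finset.sum_neg_distrib, ← Finset.sum_add_distrib, mulVec_add,
      Pi.add_apply]
    exact Finset.sum_congr rfl fun k _ => by push_cast; ring
  rw [gaussianExponent, add_sub_cancel_left, hS, hquad, hl, hsum]
  push_cast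
  ring

theorem integral_cexp_gaussianExponent (hQ : Q.det ≠ 0) (hQS : Q * Qᵀ = S)
    (hQA : Qᵀ * A * Q = diagonal μ) (hA : A.IsSymm) (m l : n → ℝ) :
    ∫ x, cexp (gaussianExponent S A m l x)
      = |Q.det| • (cexp (I / 2 * ((m ⬝ᵥ (A *ᵥ m) : ℝ) : ℂ) + I * ((l ⬝ᵥ m : ℝ) : ℂ))
        * ∫ v : n → ℝ, cexp (-∑ k, (1 - I * μ k) / 2 * (v k : ℂ) ^ 2
            + ∑ k, I * (Qᵀ *ᵥ (A *ᵥ m + l)) k * v k)) := by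
  simp only [← integral_const_mul, ← exp_add, ← gaussianExponent_add_mulVec hQ hQS hQA hA]
  rw [integral_comp_add_mulVec hQ m (fun x => cexp (gaussianExponent S A m l x)), smul_smul,
    mul_inv_cancel₀ (abs_ne_zero.2 hQ), one_smul]

theorem sq_integral_cexp_gaussianExponent_mul_prod (hQ : Q.det ≠ 0) (hQS : Q * Qᵀ = S)
    (hQA : Qᵀ * A * Q = diagonal μ) (hA : A.IsSymm) (m l : n → ℝ) :
    (∫ x, cexp (gaussianExponent S A m l x)) ^ 2 * ∏ k, (1 - I * μ k)
      = (2 * Real.pi) ^ Fintype.card n * S.det * cexp (I * ((m ⬝ᵥ (A *ᵥ m) : ℝ) : ℂ)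
          + 2 * I * ((l ⬝ᵥ m : ℝ) : ℂ)
          - ∑ k, ((Qᵀ *ᵥ (A *ᵥ m + l)) k : ℂ) ^ 2 / (1 - I * μ k)) := by
  have hb : ∀ k, 0 < ((1 - I * μ k) / 2).re := fun k => by simp
  have hdet : ((|Q.det| : ℝ) : ℂ) ^ 2 = S.det := by
    rw [← hQS, det_mul, det_transpose, ← ofReal_pow, sq_abs, sq]
  have hfactor (k : n) : Real.pi / ((1 - I * μ k) / 2)
      * cexp ((I * (Qᵀ *ᵥ (A *ᵥ m + l)) k) ^ 2 / (2 * ((1 - I * μ k) / 2))) * (1 - I * μ k)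
      = 2 * Real.pi * cexp (-(((Qᵀ *ᵥ (A *ᵥ m + l)) k : ℂ) ^ 2 / (1 - I * μ k))) := by
    have h := one_sub_I_mul_ofReal_ne_zero (μ k)
    field_simp
    rw [I_sq, neg_one_mul, neg_div]
  rw [integral_cexp_gaussianExponent hQ hQS hQA hA, real_smul, mul_pow, mul_pow,
    sq_integral_cexp_neg_sum_mul_add hb, hdet, mul_assoc, mul_assoc, ← Finset.prod_mul_distrib]
  simp only [hfactor, Finset.prod_mul_distrib, Finset.prod_const, Finset.card_univ, ← exp_sum,
    ← exp_nat_mul, Finset.sum_neg_distrib]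
  rw [sub_eq_add_neg, exp_add, mul_pow]
  push_cast
  ring_nf

theorem map_ofReal_mul_mul_eq (hQS : Q * Qᵀ = S) (hQA : Qᵀ * A * Q = diagonal μ) :
    S.map ofReal * A.map ofReal * Q.map ofReal = Q.map ofReal * diagonal (fun k => (μ k : ℂ)) := by
  have h : S * A * Q = Q * diagonal μ := by
    rw [← hQS, ← hQA]
    simp only [Matrix.mul_assoc]
  rw [← map_ofReal_mul, ← map_ofReal_mul, h, map_ofReal_mul, diagonal_map ofReal_zero]

theorem det_map_ofReal_ne_zero (hQ : Q.det ≠ 0) : (Q.map ofReal).det ≠ 0 := by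
  rw [← show ((Q.det : ℝ) : ℂ) = (Q.map ofReal).det from RingHom.map_det ofRealHom Q]
  exact_mod_cast hQ

theorem det_one_sub_I_smul_map_mul (hQ : Q.det ≠ 0) (hQS : Q * Qᵀ = S)
    (hQA : Qᵀ * A * Q = diagonal μ) :
    (1 - I • (S.map ofReal * A.map ofReal)).det = ∏ k, (1 - I * μ k) :=
  det_one_sub_smul_mul I (det_map_ofReal_ne_zero hQ) (map_ofReal_mul_mul_eq hQS hQA)

theorem sum_sq_div_eq_dotProduct_inv_one_sub_I_smul_mul (hQ : Q.det ≠ 0) (hQS : Q * Qᵀ = S)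
    (hQA : Qᵀ * A * Q = diagonal μ) (b : n → ℝ) :
    ∑ k, ((Qᵀ *ᵥ b) k : ℂ) ^ 2 / (1 - I * μ k)
      = (fun i => (b i : ℂ)) ⬝ᵥ (((1 - I • (S.map ofReal * A.map ofReal))⁻¹ * S.map ofReal)
          *ᵥ fun i => (b i : ℂ)) := by
  rw [inv_one_sub_smul_mul_mul_eq I (det_map_ofReal_ne_zero hQ)
    (by rw [← transpose_map, ← map_ofReal_mul, hQS]) (map_ofReal_mul_mul_eq hQS hQA)
    (fun k => one_sub_I_mul_ofReal_ne_zero (μ k))]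
  have h := mulVec_dotProduct_mulVec_mulVec (Q.map ofReal)ᵀ
    (diagonal fun k => (1 - I * μ k)⁻¹) (fun i => (b i : ℂ)) (fun i => (b i : ℂ))
  rw [transpose_transpose] at h
  rw [← h]
  simp only [dotProduct, mulVec_diagonal, ← transpose_map, ← ofReal_mulVec]
  exact Finset.sum_congr rfl fun k _ => by ring

theorem det_one_sub_I_smul_map_mul_ne_zero (hQ : Q.det ≠ 0) (hQS : Q * Qᵀ = S)
    (hQA : Qᵀ * A * Q = diagonal μ) : (1 - I • (S.map ofReal * A.map ofReal)).det ≠ 0 := by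
  rw [det_one_sub_I_smul_map_mul hQ hQS hQA]
  exact Finset.prod_ne_zero_iff.2 fun k _ => one_sub_I_mul_ofReal_ne_zero (μ k)

theorem exponent_eq_sub_sum_sq_div (hQ : Q.det ≠ 0) (hQS : Q * Qᵀ = S)
    (hQA : Qᵀ * A * Q = diagonal μ) (hS : S.IsSymm) (hA : A.IsSymm) (m l : n → ℝ) :
    I * ((fun i => (m i : ℂ)) ⬝ᵥ ((A.map ofReal * (1 - I • (S.map ofReal * A.map ofReal))⁻¹)
          *ᵥ fun i => (m i : ℂ)))
        + 2 * I * ((fun i => (l i : ℂ)) ⬝ᵥ ((1 - I • (S.map ofReal * A.map ofReal))⁻¹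
          *ᵥ fun i => (m i : ℂ)))
        - (fun i => (l i : ℂ)) ⬝ᵥ (((1 - I • (S.map ofReal * A.map ofReal))⁻¹ * S.map ofReal)
          *ᵥ fun i => (l i : ℂ))
      = I * ((m ⬝ᵥ (A *ᵥ m) : ℝ) : ℂ) + 2 * I * ((l ⬝ᵥ m : ℝ) : ℂ)
        - ∑ k, ((Qᵀ *ᵥ (A *ᵥ m + l)) k : ℂ) ^ 2 / (1 - I * μ k) := by
  have hb : (fun i => ((A *ᵥ m + l) i : ℂ))
      = A.map ofReal *ᵥ (fun i => (m i : ℂ)) + fun i => (l i : ℂ) :=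
    funext fun i => by simp [← ofReal_mulVec]
  rw [sum_sq_div_eq_dotProduct_inv_one_sub_I_smul_mul hQ hQS hQA, hb,
    completeSquare_inv_one_sub_I_smul_mul (hS.map _) (hA.map _)
      (det_one_sub_I_smul_map_mul_ne_zero hQ hQS hQA).isUnit,
    ofReal_dotProduct, ofReal_dotProduct, ofReal_mulVec]

end Diagonalized

theorem gaussian_quadratic_identity_general (d : ℕ)
    (S A : Matrix (Fin d) (Fin d) ℝ)
    (hS : S.PosDef) (hSsymm : S.IsSymm) (hAsymm : A.IsSymm)
    (m lam : Fin d → ℝ) (Z : ℂ)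
    (hZ : Z = ((Real.sqrt ((2 * Real.pi) ^ d * S.det) : ℝ) : ℂ)⁻¹ *
      ∫ x : Fin d → ℝ, Complex.exp (
        ((-(1 / 2) * ((x - m) ⬝ᵥ (S⁻¹ *ᵥ (x - m))) : ℝ) : ℂ)
          + (Complex.I / 2) * ((x ⬝ᵥ (A *ᵥ x) : ℝ) : ℂ)
          + Complex.I * ((lam ⬝ᵥ x : ℝ) : ℂ))) :
    ((1 : Matrix (Fin d) (Fin d) ℂ) -
        Complex.I • (S.map Complex.ofReal * A.map Complex.ofReal)).det ≠ 0 ∧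
    Z ^ 2 * ((1 : Matrix (Fin d) (Fin d) ℂ) -
        Complex.I • (S.map Complex.ofReal * A.map Complex.ofReal)).det
      = Complex.exp (
          Complex.I * ((fun i => (m i : ℂ)) ⬝ᵥ
            ((A.map Complex.ofReal *
              ((1 : Matrix (Fin d) (Fin d) ℂ) -
                Complex.I • (S.map Complex.ofReal * A.map Complex.ofReal))⁻¹) *ᵥ
              (fun i => (m i : ℂ))))
          + 2 * Complex.I * ((fun i => (lam i : ℂ)) ⬝ᵥ
            (((1 : Matrix (Fin d) (Fin d) ℂ) -
                Complex.I • (S.map Complex.ofReal * A.map Complex.ofReal))⁻¹ *ᵥ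
              (fun i => (m i : ℂ))))
          - ((fun i => (lam i : ℂ)) ⬝ᵥ
            ((((1 : Matrix (Fin d) (Fin d) ℂ) -
                Complex.I • (S.map Complex.ofReal * A.map Complex.ofReal))⁻¹ *
              S.map Complex.ofReal) *ᵥ
              (fun i => (lam i : ℂ))))) := by
  obtain ⟨Q, μ, hQS, hQA⟩ := hS.exists_simultaneous_diagonalization hAsymm
  have hQ : Q.det ≠ 0 := fun h => hS.det_pos.ne' (by rw [← hQS, det_mul, h, zero_mul])
  refine ⟨det_one_sub_I_smul_map_mul_ne_zero hQ hQS hQA, ?_⟩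
  have hSdet : (S.det : ℂ) ≠ 0 := ofReal_ne_zero.2 hS.det_pos.ne'
  have hnorm : ((√((2 * Real.pi) ^ d * S.det) : ℝ) : ℂ) ^ 2 = (2 * Real.pi) ^ d * S.det := by
    rw [← ofReal_pow, Real.sq_sqrt (by have := hS.det_pos; positivity)]
    push_cast
    ring
  have hZ' : Z = ((√((2 * Real.pi) ^ d * S.det) : ℝ) : ℂ)⁻¹
      * ∫ x, cexp (gaussianExponent S A m lam x) := hZ
  rw [exponent_eq_sub_sum_sq_div hQ hQS hQA hSsymm hAsymm, hZ',
    det_one_sub_I_smul_map_mul hQ hQS hQA,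
    mul_pow, mul_assoc, sq_integral_cexp_gaussianExponent_mul_prod hQ hQS hQA hAsymm, inv_pow,
    hnorm, Fintype.card_fin]
  field_simp

/-- the (squared, branch-free) finite-dimensional Gaussian integral identity:
for `Σ` real symmetric positive definite, `A` real symmetric, the matrix `I - iΣA` is
invertible and `Z² · det(I - iΣA) = exp( i⟨m, A(I-iΣA)⁻¹m⟩ + 2i⟨λ, (I-iΣA)⁻¹m⟩
- ⟨λ, (I-iΣA)⁻¹Σλ⟩ )`. -/
theorem gaussian_quadratic_identity (d : ℕ) (hd : 1 ≤ d)
    (S A : Matrix (Fin d) (Fin d) ℝ)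
    (hS : S.PosDef) (hSsymm : S.IsSymm) (hAsymm : A.IsSymm)
    (m lam : Fin d → ℝ) (Z : ℂ)
    (hZ : Z = ((Real.sqrt ((2 * Real.pi) ^ d * S.det) : ℝ) : ℂ)⁻¹ *
      ∫ x : Fin d → ℝ, Complex.exp (
        ((-(1 / 2) * ((x - m) ⬝ᵥ (S⁻¹ *ᵥ (x - m))) : ℝ) : ℂ)
          + (Complex.I / 2) * ((x ⬝ᵥ (A *ᵥ x) : ℝ) : ℂ)
          + Complex.I * ((lam ⬝ᵥ x : ℝ) : ℂ))) :
    ((1 : Matrix (Fin d) (Fin d) ℂ) -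
        Complex.I • (S.map Complex.ofReal * A.map Complex.ofReal)).det ≠ 0 ∧
    Z ^ 2 * ((1 : Matrix (Fin d) (Fin d) ℂ) -
        Complex.I • (S.map Complex.ofReal * A.map Complex.ofReal)).det
      = Complex.exp (
          Complex.I * ((fun i => (m i : ℂ)) ⬝ᵥ
            ((A.map Complex.ofReal *
              ((1 : Matrix (Fin d) (Fin d) ℂ) -
                Complex.I • (S.map Complex.ofReal * A.map Complex.ofReal))⁻¹) *ᵥ
              (fun i => (m i : ℂ))))
          + 2 * Complex.I * ((fun i => (lam i : ℂ)) ⬝ᵥ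
            (((1 : Matrix (Fin d) (Fin d) ℂ) -
                Complex.I • (S.map Complex.ofReal * A.map Complex.ofReal))⁻¹ *ᵥ
              (fun i => (m i : ℂ))))
          - ((fun i => (lam i : ℂ)) ⬝ᵥ
            ((((1 : Matrix (Fin d) (Fin d) ℂ) -
                Complex.I • (S.map Complex.ofReal * A.map Complex.ofReal))⁻¹ *
              S.map Complex.ofReal) *ᵥ
              (fun i => (lam i : ℂ))))) :=
  gaussian_quadratic_identity_general d S A hS hSsymm hAsymm m lam Z hZ
end
end

section
/- For all integers 𝔱 ≥ 1 and n ≥ 1: ∏_{j=1}^{𝔱n−1} j! = ( ∏_{j=1}^{n−1} (𝔱j)! )^𝔱 · 𝔱^{n𝔱(𝔱−1)/2} · ∏_{p=1}^{𝔱−1} ( Γ(p/𝔱 + n) / Γ(p/𝔱) )^{𝔱−p}, where Γ is the Gamma function (empty products being equal to 1). -/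
open Finset

private lemma fact_ratio (m : ℕ) : ∀ t : ℕ,
    ((m + t).factorial : ℝ) = (m.factorial : ℝ) * ∏ p ∈ Icc 1 t, ((m + p : ℕ) : ℝ) := by
  intro t
  induction t with
  | zero => simp
  | succ t ih =>
    rw [Finset.prod_Icc_succ_top (by omega),
      show m + (t + 1) = (m + t) + 1 from by omega, Nat.factorial_succ]
    push_cast
    rw [ih]
    push_cast
    ring

private lemma lemC (m : ℕ) : ∀ t : ℕ,
    (∏ k ∈ range t, ((m + k).factorial : ℝ))
      = (m.factorial : ℝ) ^ t * ∏ p ∈ Icc 1 (t - 1), ((m + p : ℕ) : ℝ) ^ (t - p) := by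
  intro t
  induction t with
  | zero => simp
  | succ t ih =>
    have h2 : ∏ p ∈ Icc 1 t, ((m + p : ℕ) : ℝ) ^ (t - p)
        = ∏ p ∈ Icc 1 (t - 1), ((m + p : ℕ) : ℝ) ^ (t - p) := by
      cases t with
      | zero => simp
      | succ s =>
        rw [Nat.succ_sub_one, Finset.prod_Icc_succ_top (by omega)]
        simp
    have h1 : ∏ p ∈ Icc 1 t, ((m + p : ℕ) : ℝ) ^ (t + 1 - p)
        = (∏ p ∈ Icc 1 t, ((m + p : ℕ) : ℝ) ^ (t - p)) * ∏ p ∈ Icc 1 t, ((m + p : ℕ) : ℝ) := by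
      rw [← Finset.prod_mul_distrib]
      apply Finset.prod_congr rfl
      intro p hp
      rw [Finset.mem_Icc] at hp
      rw [show t + 1 - p = (t - p) + 1 from by omega, pow_succ]
    rw [Finset.prod_range_succ, ih, fact_ratio, Nat.add_sub_cancel, h1, h2]
    ring

private lemma sum_two : ∀ t : ℕ, (∑ p ∈ Icc 1 (t - 1), (t - p)) * 2 = t * (t - 1) := by
  intro t
  induction t with
  | zero => simp
  | succ t ih =>
    cases t with
    | zero => simp
    | succ s =>
      simp only [Nat.add_sub_cancel] at ih ⊢
      have hc : ∑ p ∈ Icc 1 (s + 1), (s + 1 + 1 - p)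
          = (∑ p ∈ Icc 1 (s + 1), (s + 1 - p)) + (s + 1) := by
        have : ∀ p ∈ Icc 1 (s + 1), s + 1 + 1 - p = (s + 1 - p) + 1 := by
          intro p hp; rw [Finset.mem_Icc] at hp; omega
        rw [Finset.sum_congr rfl this, Finset.sum_add_distrib, Finset.sum_const,
          Nat.card_Icc, smul_eq_mul]
        omega
      have hd : ∑ p ∈ Icc 1 (s + 1), (s + 1 - p) = ∑ p ∈ Icc 1 s, (s + 1 - p) := by
        rw [Finset.sum_Icc_succ_top (by omega)]
        simp
      rw [hc, hd, add_mul, ih]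
      ring

private lemma sum_lem (t : ℕ) : ∑ p ∈ Icc 1 (t - 1), (t - p) = t * (t - 1) / 2 := by
  rw [← sum_two t, Nat.mul_div_cancel _ (by norm_num)]

private lemma prod_range_eq_prod_Icc {f : ℕ → ℝ} (hf : f 0 = 1) {t : ℕ} (ht : 1 ≤ t) :
    ∏ k ∈ range t, f k = ∏ k ∈ Icc 1 (t - 1), f k := by
  have h : Finset.Icc 1 (t - 1) = Finset.Ico 1 t := by
    rw [← Finset.Ico_add_one_right_eq_Icc]; congr 1; omega
  rw [h, Finset.range_eq_Ico, Finset.prod_eq_prod_Ico_succ_bot (by omega), hf, one_mul]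

/-- for all integers `𝔱 ≥ 1` and `n ≥ 1`,
`∏_{j=1}^{𝔱n-1} j! = (∏_{j=1}^{n-1} (𝔱j)!)^𝔱 · 𝔱^{n𝔱(𝔱-1)/2}
· ∏_{p=1}^{𝔱-1} (Γ(p/𝔱 + n)/Γ(p/𝔱))^{𝔱-p}`. -/
theorem factorial_product_gamma_identity (t n : ℕ) (ht : 1 ≤ t) (hn : 1 ≤ n) :
    (∏ j ∈ Finset.Icc 1 (t * n - 1), (Nat.factorial j : ℝ))
      = (∏ j ∈ Finset.Icc 1 (n - 1), (Nat.factorial (t * j) : ℝ)) ^ t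
        * (t : ℝ) ^ (n * t * (t - 1) / 2)
        * ∏ p ∈ Finset.Icc 1 (t - 1),
            (Real.Gamma ((p : ℝ) / t + n) / Real.Gamma ((p : ℝ) / t)) ^ (t - p) := by
  have ht' : (0:ℝ) < t := by exact_mod_cast ht
  induction n, hn using Nat.le_induction with
  | base =>
    have key : ∀ p ∈ Icc 1 (t - 1),
        (Real.Gamma ((p:ℝ)/t + (1:ℕ)) / Real.Gamma ((p:ℝ)/t)) ^ (t - p)
          = ((p:ℝ)/t) ^ (t - p) := by
      intro p hp
      rw [Finset.mem_Icc] at hp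
      have hp0 : (0:ℝ) < (p:ℝ)/t := div_pos (by exact_mod_cast hp.1) ht'
      rw [Nat.cast_one, Real.Gamma_add_one (ne_of_gt hp0), mul_div_assoc,
        div_self (ne_of_gt (Real.Gamma_pos_of_pos hp0)), mul_one]
    rw [show t * 1 - 1 = t - 1 from by omega, show (1:ℕ) - 1 = 0 from rfl,
      show 1 * t * (t - 1) = t * (t - 1) from by rw [one_mul],
      Finset.Icc_eq_empty (by omega : ¬ (1:ℕ) ≤ 0), Finset.prod_empty, one_pow, one_mul,
      Finset.prod_congr rfl key]
    have e3 : ∏ p ∈ Icc 1 (t - 1), ((p:ℝ)/t) ^ (t - p)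
        = (∏ p ∈ Icc 1 (t - 1), (p:ℝ) ^ (t - p)) / (t:ℝ) ^ (t * (t - 1) / 2) := by
      simp_rw [div_pow]
      rw [Finset.prod_div_distrib, Finset.prod_pow_eq_pow_sum, sum_lem]
    rw [e3, mul_div_cancel₀ _ (pow_ne_zero _ (ne_of_gt ht'))]
    have := lemC 0 t
    simp only [Nat.zero_add, zero_add, Nat.factorial_zero, Nat.cast_one, one_pow, one_mul] at this
    rw [← prod_range_eq_prod_Icc (by simp) ht, this]
  | succ n hn ih =>
    have htn : 0 < t * n := Nat.mul_pos ht hn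
    have htn1 : 0 < t * (n + 1) := Nat.mul_pos ht (by omega)
    have hmulsucc : t * (n + 1) = t * n + t := by ring
    obtain ⟨m, hm⟩ : ∃ m, t * (t - 1) = 2 * m := by
      obtain ⟨s, rfl⟩ : ∃ s, t = s + 1 := ⟨t - 1, by omega⟩
      obtain ⟨k, hk⟩ := Nat.even_mul_succ_self s
      exact ⟨k, by rw [Nat.add_sub_cancel, mul_comm, hk, two_mul]⟩
    have hdiv : ∀ k : ℕ, k * t * (t - 1) / 2 = k * m := by
      intro k
      rw [mul_assoc, hm, show k * (2 * m) = (k * m) * 2 from by ring,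
        Nat.mul_div_cancel _ (by norm_num)]
    have hdiv2 : t * (t - 1) / 2 = m := by rw [hm]; omega
    have gkey : ∀ p ∈ Finset.Icc 1 (t - 1),
        (Real.Gamma ((p:ℝ)/t + ↑(n + 1)) / Real.Gamma ((p:ℝ)/t)) ^ (t - p)
          = ((p:ℝ)/t + n) ^ (t - p)
            * (Real.Gamma ((p:ℝ)/t + n) / Real.Gamma ((p:ℝ)/t)) ^ (t - p) := by
      intro p hp
      rw [Finset.mem_Icc] at hp
      have hp0 : (0:ℝ) < (p:ℝ)/t := div_pos (by exact_mod_cast hp.1) ht'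
      have hx : ((p:ℝ)/t + n) ≠ 0 := by
        have : (0:ℝ) ≤ n := Nat.cast_nonneg n
        positivity
      rw [show ((p:ℝ)/t + ↑(n + 1)) = ((p:ℝ)/t + n) + 1 from by push_cast; ring,
        Real.Gamma_add_one hx, mul_div_assoc, mul_pow]
    have hsplit : ∏ j ∈ Finset.Icc 1 (t * (n + 1) - 1), (Nat.factorial j : ℝ)
        = (∏ j ∈ Finset.Icc 1 (t * n - 1), (Nat.factorial j : ℝ))
          * ∏ k ∈ Finset.range t, ((t * n + k).factorial : ℝ) := by
      have h1 : Finset.Icc 1 (t * (n + 1) - 1) = Finset.Ico 1 (t * (n + 1)) := by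
        rw [← Finset.Ico_add_one_right_eq_Icc]; congr 1; omega
      have h2 : Finset.Icc 1 (t * n - 1) = Finset.Ico 1 (t * n) := by
        rw [← Finset.Ico_add_one_right_eq_Icc]; congr 1; omega
      have h3 : t * (n + 1) - t * n = t := by omega
      rw [h1, h2, ← Finset.prod_Ico_consecutive _ (by omega : 1 ≤ t * n)
          (by omega : t * n ≤ t * (n + 1))]
      congr 1
      rw [Finset.prod_Ico_eq_prod_range, h3]
    have h4 : (∏ j ∈ Finset.Icc 1 (n + 1 - 1), (Nat.factorial (t * j) : ℝ))
        = (∏ j ∈ Finset.Icc 1 (n - 1), (Nat.factorial (t * j) : ℝ)) * ((t * n).factorial : ℝ) := by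
      rw [Nat.add_sub_cancel]
      conv_lhs => rw [show n = (n - 1) + 1 from by omega]
      rw [Finset.prod_Icc_succ_top (by omega), show (n - 1) + 1 = n from by omega]
    have h5 : (t:ℝ) ^ m * ∏ p ∈ Finset.Icc 1 (t - 1), ((p:ℝ)/t + n) ^ (t - p)
        = ∏ p ∈ Finset.Icc 1 (t - 1), ((t * n + p : ℕ) : ℝ) ^ (t - p) := by
      have ht0 : (t:ℝ) ^ m = ∏ p ∈ Finset.Icc 1 (t - 1), (t:ℝ) ^ (t - p) := by
        rw [Finset.prod_pow_eq_pow_sum, sum_lem, hdiv2]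
      rw [ht0, ← Finset.prod_mul_distrib]
      apply Finset.prod_congr rfl
      intro p hp
      rw [← mul_pow]
      congr 1
      push_cast
      field_simp
      ring
    rw [hsplit, ih, lemC, h4, Finset.prod_congr rfl gkey, Finset.prod_mul_distrib]
    simp only [hdiv]
    rw [show (n + 1) * m = n * m + m from by ring, pow_add, ← h5]
    ring
end
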